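/- arXiv:2206.11573 — 6 statements merged into one kernel-verified Lean document; each statement's English description precedes it below -/
import Mathlib

section
/- Let C be a normal compressor on Ω with respect to the aggregation function ψ that is in addition subadditive. Then the normalized compression distance satisfies the triangle inequality: NCD(x, y) ≤ NCD(x, z) + NCD(z, y) for all x, y, z ∈ Ω. -/
/-- The normalized compression distance associated to a compressed-length
function `C` and an aggregation function `ψ`. -/
noncomputable def NCD {Ω : Type*} (C : Ω → ℝ) (ψ : Ω × Ω → Ω) (x y : Ω) : ℝ :=
  (C (ψ (x, y)) - min (C x) (C y)) / max (C x) (C y)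

lemma NCD_comm {Ω : Type*} (C : Ω → ℝ) (ψ : Ω × Ω → Ω)
    (hsymm : ∀ x y, C (ψ (x, y)) = C (ψ (y, x))) (x y : Ω) :
    NCD C ψ x y = NCD C ψ y x := by
  unfold NCD; rw [hsymm, min_comm, max_comm]

lemma NCD_key {Ω : Type*} (C : Ω → ℝ) (ψ : Ω × Ω → Ω)
    (hpos : ∀ x, 0 < C x)
    (hsymm : ∀ x y, C (ψ (x, y)) = C (ψ (y, x)))
    (hmono : ∀ x y, C x ≤ C (ψ (x, y)))
    (hdistrib : ∀ x y z, C (ψ (x, y)) + C z ≤ C (ψ (x, z)) + C (ψ (y, z)))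
    (hsub : ∀ x y, C (ψ (x, y)) ≤ C x + C y)
    (x y z : Ω) (hxy : C x ≤ C y) :
    NCD C ψ x y ≤ NCD C ψ x z + NCD C ψ z y := by
  have hx := hpos x; have hy := hpos y; have hz := hpos z
  have hd : C (ψ (x, y)) + C z ≤ C (ψ (x, z)) + C (ψ (z, y)) := by
    have := hdistrib x y z; rw [hsymm y z] at this; exact this
  have hmxz : C z ≤ C (ψ (x, z)) := by rw [hsymm]; exact hmono z x
  have hmzy : C z ≤ C (ψ (z, y)) := hmono z y
  have hmxz' : C x ≤ C (ψ (x, z)) := hmono x z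
  have hmzy' : C y ≤ C (ψ (z, y)) := by rw [hsymm]; exact hmono y z
  have hsxy : C (ψ (x, y)) ≤ C x + C y := hsub x y
  unfold NCD
  rw [min_eq_left hxy, max_eq_right hxy]
  rcases le_total (C z) (C x) with hzx | hxz
  · -- C z ≤ C x ≤ C y
    rw [min_eq_right hzx, max_eq_left hzx, min_eq_left (hzx.trans hxy),
      max_eq_right (hzx.trans hxy)]
    have h2 : (C (ψ (x, z)) - C z) / C y ≤ (C (ψ (x, z)) - C z) / C x := by
      gcongr
    have h1 : (C (ψ (x, y)) - C x) / C y ≤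
        (C (ψ (x, z)) - C z) / C y + (C (ψ (z, y)) - C z) / C y := by
      rw [← add_div, div_le_div_iff_of_pos_right hy]
      linarith
    linarith
  · rcases le_total (C z) (C y) with hzy | hyz
    · -- C x ≤ C z ≤ C y
      rw [min_eq_left hxz, max_eq_right hxz, min_eq_left hzy, max_eq_right hzy]
      have h2 : (C (ψ (x, z)) - C x) / C y ≤ (C (ψ (x, z)) - C x) / C z := by
        gcongr
      have h1 : (C (ψ (x, y)) - C x) / C y ≤
          (C (ψ (x, z)) - C x) / C y + (C (ψ (z, y)) - C z) / C y := by
        rw [← add_div, div_le_div_iff_of_pos_right hy]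
        linarith
      linarith
    · -- C x ≤ C y ≤ C z
      rw [min_eq_left hxz, max_eq_right hxz, min_eq_right hyz, max_eq_left hyz]
      rw [← add_div]
      rcases le_total (C z) (C (ψ (x, z)) + C (ψ (z, y)) - C x - C y) with hA | hB
      · have hL : (C (ψ (x, y)) - C x) / C y ≤ 1 := by
          rw [div_le_one hy]; linarith
        have hR : (1 : ℝ) ≤ (C (ψ (x, z)) - C x + (C (ψ (z, y)) - C y)) / C z := by
          rw [le_div_iff₀ hz]; linarith
        linarith
      · have step : (C (ψ (x, y)) - C x) / C y ≤
            (C (ψ (x, z)) + C (ψ (z, y)) - C z - C x) / C y := by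
          rw [div_le_div_iff_of_pos_right hy]; linarith
        have step2 : (C (ψ (x, z)) + C (ψ (z, y)) - C z - C x) / C y ≤
            (C (ψ (x, z)) - C x + (C (ψ (z, y)) - C y)) / C z := by
          rw [div_le_div_iff₀ hy hz]
          nlinarith [mul_nonneg (sub_nonneg.mpr hyz)
            (sub_nonneg.mpr hB)]
        linarith

/-- If `C` is a normal compressor with respect to `ψ` that is moreover
subadditive, then `NCD` satisfies the triangle inequality:
`NCD x y ≤ NCD x z + NCD z y` for all `x y z`. -/
theorem NCD_triangle {Ω : Type*} [Nonempty Ω] (C : Ω → ℝ) (ψ : Ω × Ω → Ω)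
    (hpos : ∀ x, 0 < C x)
    (hidem : ∀ x, C (ψ (x, x)) = C x)
    (hsymm : ∀ x y, C (ψ (x, y)) = C (ψ (y, x)))
    (hmono : ∀ x y, C x ≤ C (ψ (x, y)))
    (hdistrib : ∀ x y z, C (ψ (x, y)) + C z ≤ C (ψ (x, z)) + C (ψ (y, z)))
    (hsub : ∀ x y, C (ψ (x, y)) ≤ C x + C y) :
    ∀ x y z : Ω, NCD C ψ x y ≤ NCD C ψ x z + NCD C ψ z y := by
  intro x y z
  rcases le_total (C x) (C y) with h | h
  · exact NCD_key C ψ hpos hsymm hmono hdistrib hsub x y z h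
  · have := NCD_key C ψ hpos hsymm hmono hdistrib hsub y x z h
    rw [NCD_comm C ψ hsymm y x, NCD_comm C ψ hsymm y z, NCD_comm C ψ hsymm z x]
      at this
    linarith
end

section
/- Let C be a normal compressor on Ω with respect to the aggregation function ψ that is in addition subadditive. Then NCD is a normalized distance satisfying the metric (in)equalities: for all x, y, z ∈ Ω, (i) NCD(x, x) = 0, (ii) NCD(x, y) = NCD(y, x), (iii) NCD(x, y) ≤ NCD(x, z) + NCD(z, y), and (iv) 0 ≤ NCD(x, y) ≤ 1. -/
/-- If `C` is a normal compressor with respect to `ψ` that is moreover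
subadditive, then `NCD` is a normalized distance satisfying the metric
(in)equalities: identity, symmetry, triangle inequality, and values in `[0,1]`. -/
theorem NCD_is_normalized_metric {Ω : Type*} [Nonempty Ω] (C : Ω → ℝ)
    (ψ : Ω × Ω → Ω)
    (hpos : ∀ x, 0 < C x)
    (hidem : ∀ x, C (ψ (x, x)) = C x)
    (hsymm : ∀ x y, C (ψ (x, y)) = C (ψ (y, x)))
    (hmono : ∀ x y, C x ≤ C (ψ (x, y)))
    (hdistrib : ∀ x y z, C (ψ (x, y)) + C z ≤ C (ψ (x, z)) + C (ψ (y, z)))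
    (hsub : ∀ x y, C (ψ (x, y)) ≤ C x + C y) :
    ∀ x y z : Ω,
      NCD C ψ x x = 0 ∧
      NCD C ψ x y = NCD C ψ y x ∧
      NCD C ψ x y ≤ NCD C ψ x z + NCD C ψ z y ∧
      (0 ≤ NCD C ψ x y ∧ NCD C ψ x y ≤ 1) := by
  have symm : ∀ x y : Ω, NCD C ψ x y = NCD C ψ y x := by
    intro x y
    simp only [NCD, hsymm x y, min_comm (C x) (C y), max_comm (C x) (C y)]
  have key : ∀ x y z : Ω, C x ≤ C y →
      NCD C ψ x y ≤ NCD C ψ x z + NCD C ψ z y := by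
    intro x y z hxy
    have ha := hpos x; have hb := hpos y; have hc := hpos z
    have hd : C (ψ (x, y)) + C z ≤ C (ψ (x, z)) + C (ψ (z, y)) := by
      have := hdistrib x y z; rwa [hsymm y z] at this
    have hm1 : C x ≤ C (ψ (x, y)) := hmono x y
    have hm2 : C x ≤ C (ψ (x, z)) := hmono x z
    have hm3 : C z ≤ C (ψ (x, z)) := by rw [hsymm x z]; exact hmono z x
    have hm4 : C z ≤ C (ψ (z, y)) := hmono z y
    have hm5 : C y ≤ C (ψ (z, y)) := by rw [hsymm z y]; exact hmono y z
    have hs1 : C (ψ (x, y)) ≤ C x + C y := hsub x y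
    simp only [NCD, min_eq_left hxy, max_eq_right hxy]
    rcases le_total (C z) (C x) with hzx | hxz
    · -- C z ≤ C x ≤ C y
      rw [min_eq_right hzx, max_eq_left hzx, min_eq_left (hzx.trans hxy),
        max_eq_right (hzx.trans hxy)]
      rw [div_add_div _ _ ha.ne' hb.ne', div_le_div_iff₀ hb (by positivity)]
      have hkey : (C (ψ (x, y)) - C x) * C x ≤
          (C (ψ (x, z)) - C z) * C y + C x * (C (ψ (z, y)) - C z) := by
        nlinarith [mul_nonneg (sub_nonneg.2 hxy) (sub_nonneg.2 hm3),
          mul_nonneg ha.le (sub_nonneg.2 hd),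
          mul_nonneg ha.le (sub_nonneg.2 hzx)]
      nlinarith [mul_le_mul_of_nonneg_right hkey hb.le]
    · rcases le_total (C z) (C y) with hzy | hyz
      · -- C x ≤ C z ≤ C y
        rw [min_eq_left hxz, max_eq_right hxz, min_eq_left hzy, max_eq_right hzy]
        rw [div_add_div _ _ hc.ne' hb.ne', div_le_div_iff₀ hb (by positivity)]
        have hkey : (C (ψ (x, y)) - C x) * C z ≤
            (C (ψ (x, z)) - C x) * C y + C z * (C (ψ (z, y)) - C z) := by
          nlinarith [mul_nonneg (sub_nonneg.2 hzy) (sub_nonneg.2 hm2),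
            mul_nonneg hc.le (sub_nonneg.2 hd)]
        nlinarith [mul_le_mul_of_nonneg_right hkey hb.le]
      · -- C x ≤ C y ≤ C z
        rw [min_eq_left hxz, max_eq_right hxz, min_eq_right hyz, max_eq_left hyz]
        rw [← add_div, div_le_div_iff₀ hb hc]
        nlinarith [mul_nonneg hb.le (sub_nonneg.2 hd),
          mul_nonneg (sub_nonneg.2 hyz) (sub_nonneg.2 (by linarith : C (ψ (x, y)) - C x ≤ C y))]
  have bounds : ∀ x y : Ω, 0 ≤ NCD C ψ x y ∧ NCD C ψ x y ≤ 1 := by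
    intro x y
    simp only [NCD]
    have ha := hpos x; have hb := hpos y
    have hmax : (0:ℝ) < max (C x) (C y) := lt_max_of_lt_left ha
    have hm1 : C x ≤ C (ψ (x, y)) := hmono x y
    have hm2 : C y ≤ C (ψ (x, y)) := by rw [hsymm x y]; exact hmono y x
    have hs : C (ψ (x, y)) ≤ C x + C y := hsub x y
    constructor
    · apply div_nonneg _ hmax.le
      rcases le_total (C x) (C y) with h | h
      · rw [min_eq_left h]; linarith
      · rw [min_eq_right h]; linarith
    · rw [div_le_one hmax]
      rcases le_total (C x) (C y) with h | h
      · rw [min_eq_left h, max_eq_right h]; linarith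
      · rw [min_eq_right h, max_eq_left h]; linarith
  intro x y z
  refine ⟨?_, symm x y, ?_, bounds x y⟩
  · simp [NCD, hidem x]
  · rcases le_total (C x) (C y) with h | h
    · exact key x y z h
    · calc NCD C ψ x y = NCD C ψ y x := symm x y
        _ ≤ NCD C ψ y z + NCD C ψ z x := key y x z h
        _ = NCD C ψ x z + NCD C ψ z y := by rw [symm y z, symm z x]; ring
end

section
/- Let C be a normal compressor on Ω with respect to the aggregation function ψ that is in addition subadditive. Then the compression-based dissimilarity CLM takes values in [0, 1]: for all x, y ∈ Ω, 0 ≤ CLM(x, y) ≤ 1, where CLM(x,y) = 1 − (C(x) + C(y) − C(ψ(x,y))) / C(ψ(x,y)). -/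
/-- The compression-based dissimilarity measure `CLM` associated to a
compressed-length function `C` and an aggregation function `ψ`. -/
noncomputable def CLM {Ω : Type*} (C : Ω → ℝ) (ψ : Ω × Ω → Ω) (x y : Ω) : ℝ :=
  1 - (C x + C y - C (ψ (x, y))) / C (ψ (x, y))

/-- If `C` is a normal compressor with respect to `ψ` that is moreover
subadditive, then `CLM` takes values in `[0, 1]`. -/
theorem CLM_mem_Icc {Ω : Type*} [Nonempty Ω] (C : Ω → ℝ) (ψ : Ω × Ω → Ω)
    (hpos : ∀ x, 0 < C x)
    (hidem : ∀ x, C (ψ (x, x)) = C x)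
    (hsymm : ∀ x y, C (ψ (x, y)) = C (ψ (y, x)))
    (hmono : ∀ x y, C x ≤ C (ψ (x, y)))
    (hdistrib : ∀ x y z, C (ψ (x, y)) + C z ≤ C (ψ (x, z)) + C (ψ (y, z)))
    (hsub : ∀ x y, C (ψ (x, y)) ≤ C x + C y) :
    ∀ x y : Ω, 0 ≤ CLM C ψ x y ∧ CLM C ψ x y ≤ 1 := by
  intro x y
  have hxy : 0 < C (ψ (x, y)) := lt_of_lt_of_le (hpos x) (hmono x y)
  have hy : C y ≤ C (ψ (x, y)) := (hsymm x y) ▸ hmono y x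
  constructor
  · have h2 : C x + C y ≤ 2 * C (ψ (x, y)) := by
      have := hmono x y; linarith
    have : (C x + C y - C (ψ (x, y))) / C (ψ (x, y)) ≤ 1 := by
      rw [div_le_one hxy]; linarith
    unfold CLM; linarith
  · have : 0 ≤ (C x + C y - C (ψ (x, y))) / C (ψ (x, y)) := by
      apply div_nonneg _ hxy.le
      have := hsub x y; linarith
    unfold CLM; linarith
end

section
/- rANS decoding correctly recovers the encoded symbol: for every state s ∈ ℕ and symbol x ∈ V, the remainder r = G(s, x) mod M satisfies b(x) ≤ r < b(x) + f(x); moreover x is the unique such symbol, i.e. for any y ∈ V with b(y) ≤ r < b(y) + f(y), one has y = x. -/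
/-- Cumulative frequency count: `b v = ∑_{w < v} f w`. -/
def cumFreq {V : Type*} [Fintype V] [LinearOrder V] (f : V → ℕ) (v : V) : ℕ :=
  ∑ w ∈ Finset.univ.filter (fun w => w < v), f w

/-- The rANS encoding function
`G(s, x) = ⌊s / f x⌋ * M + b x + (s mod f x)` where `M = ∑_v f v`. -/
def ransEncode {V : Type*} [Fintype V] [LinearOrder V] (f : V → ℕ)
    (s : ℕ) (x : V) : ℕ :=
  s / f x * (∑ v, f v) + cumFreq f x + s % f x

lemma cumFreq_add_eq {V : Type*} [Fintype V] [LinearOrder V] (f : V → ℕ) (x : V) :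
    cumFreq f x + f x = ∑ w ∈ Finset.univ.filter (fun w => w ≤ x), f w := by
  have : Finset.univ.filter (fun w => w ≤ x)
      = insert x (Finset.univ.filter (fun w => w < x)) := by
    ext w; simp [le_iff_lt_or_eq, or_comm]
  rw [this, Finset.sum_insert (by simp), cumFreq, add_comm]

lemma cumFreq_add_le {V : Type*} [Fintype V] [LinearOrder V] (f : V → ℕ) {x y : V}
    (h : x < y) : cumFreq f x + f x ≤ cumFreq f y := by
  rw [cumFreq_add_eq, cumFreq]
  exact Finset.sum_le_sum_of_subset (fun w hw => by
    simp only [Finset.mem_filter, Finset.mem_univ, true_and] at *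
    exact lt_of_le_of_lt hw h)

lemma cumFreq_add_le_total {V : Type*} [Fintype V] [LinearOrder V] (f : V → ℕ) (x : V) :
    cumFreq f x + f x ≤ ∑ v, f v := by
  rw [cumFreq_add_eq]
  exact Finset.sum_le_sum_of_subset (fun w _ => Finset.mem_univ w)

/-- rANS decoding recovers the encoded symbol: `r = G(s, x) mod M` satisfies
`b x ≤ r < b x + f x`, and `x` is the unique symbol with this property. -/
theorem ransEncode_mod_recovers_symbol {V : Type*} [Fintype V] [LinearOrder V]
    (f : V → ℕ) (hf : ∀ v, 1 ≤ f v) (s : ℕ) (x : V) :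
    cumFreq f x ≤ ransEncode f s x % (∑ v, f v) ∧
    ransEncode f s x % (∑ v, f v) < cumFreq f x + f x ∧
    ∀ y : V, cumFreq f y ≤ ransEncode f s x % (∑ v, f v) →
      ransEncode f s x % (∑ v, f v) < cumFreq f y + f y → y = x := by
  have hfx : 0 < f x := hf x
  have hlt : cumFreq f x + s % f x < ∑ v, f v :=
    lt_of_lt_of_le (by have := Nat.mod_lt s hfx; omega) (cumFreq_add_le_total f x)
  have hmod : ransEncode f s x % (∑ v, f v) = cumFreq f x + s % f x := by
    rw [ransEncode, add_assoc, mul_comm, Nat.mul_add_mod, Nat.mod_eq_of_lt hlt]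
  rw [hmod]
  refine ⟨Nat.le_add_right _ _, by have := Nat.mod_lt s hfx; omega, fun y h1 h2 => ?_⟩
  rcases lt_trichotomy y x with h | h | h
  · exact absurd (cumFreq_add_le f h) (by omega)
  · exact h
  · have := cumFreq_add_le f h
    have := Nat.mod_lt s hfx
    omega
end

section
/- rANS decoding correctly recovers the previous state: for every state s ∈ ℕ and symbol x ∈ V, one has ⌊G(s, x) / M⌋ = ⌊s / f(x)⌋, and f(x)·⌊G(s, x) / M⌋ + (G(s, x) mod M) = s + b(x); equivalently, the decoded state f(x)·⌊G(s, x) / M⌋ + (G(s, x) mod M) − b(x) equals s. -/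
/-- rANS decoding recovers the previous state:
`⌊G(s, x) / M⌋ = ⌊s / f x⌋`, and
`f x * ⌊G(s, x) / M⌋ + (G(s, x) mod M) = s + b x`; equivalently the decoded
state `f x * ⌊G(s, x) / M⌋ + (G(s, x) mod M) - b x` equals `s`. -/
theorem ransEncode_decode_state {V : Type*} [Fintype V] [LinearOrder V]
    (f : V → ℕ) (hf : ∀ v, 1 ≤ f v) (s : ℕ) (x : V) :
    ransEncode f s x / (∑ v, f v) = s / f x ∧
    f x * (ransEncode f s x / (∑ v, f v)) + ransEncode f s x % (∑ v, f v)
      = s + cumFreq f x ∧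
    f x * (ransEncode f s x / (∑ v, f v)) + ransEncode f s x % (∑ v, f v)
      - cumFreq f x = s := by
  set M := ∑ v, f v with hM
  have hr : cumFreq f x + s % f x < M := by
    have h1 : s % f x < f x := Nat.mod_lt _ (hf x)
    have h2 : f x + cumFreq f x ≤ M := by
      have heq : f x + cumFreq f x
          = ∑ w ∈ insert x (Finset.univ.filter (fun w => w < x)), f w := by
        rw [Finset.sum_insert (by simp)]
        rfl
      rw [heq, hM]
      exact Finset.sum_le_sum_of_subset (by simp)
    omega
  have hMpos : 0 < M := by omega
  have hG : ransEncode f s x = M * (s / f x) + (cumFreq f x + s % f x) := by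
    unfold ransEncode
    rw [← hM]; ring
  have hdiv : ransEncode f s x / M = s / f x := by
    rw [hG, Nat.mul_add_div hMpos, Nat.div_eq_of_lt hr, Nat.add_zero]
  have hmod : ransEncode f s x % M = cumFreq f x + s % f x := by
    rw [hG, Nat.mul_add_mod, Nat.mod_eq_of_lt hr]
  have hsd : f x * (s / f x) + s % f x = s := Nat.div_add_mod s (f x)
  refine ⟨hdiv, ?_, ?_⟩ <;> rw [hdiv, hmod] <;> omega
end

section
/- The minimum number of initial bits required by Bit-Swap is no more than that required by BB-ANS: for real numbers q₁, …, q_L ∈ (0, 1] and p₁, …, p_{L−1} ∈ (0, 1], one has −max(0, log q₁) + ∑_{i=1}^{L−1} max(0, log(pᵢ / q_{i+1})) ≤ −log q₁ − ∑_{i=1}^{L−1} log q_{i+1}. -/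
/-- The minimum number of initial bits required by Bit-Swap is at most that
required by BB-ANS: for `q₁, …, q_L ∈ (0,1]` and `p₁, …, p_{L-1} ∈ (0,1]`,
`-max 0 (log q₁) + ∑_{i=1}^{L-1} max 0 (log (pᵢ / q_{i+1}))
  ≤ -log q₁ - ∑_{i=1}^{L-1} log q_{i+1}`. -/
theorem bitSwap_initial_bits_le_bbans {L : ℕ} (hL : 2 ≤ L) (q p : ℕ → ℝ)
    (hq : ∀ i, 1 ≤ i → i ≤ L → 0 < q i ∧ q i ≤ 1)
    (hp : ∀ i, 1 ≤ i → i ≤ L - 1 → 0 < p i ∧ p i ≤ 1) :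
    -max 0 (Real.log (q 1)) +
        ∑ i ∈ Finset.Icc 1 (L - 1), max 0 (Real.log (p i / q (i + 1))) ≤
      -Real.log (q 1) - ∑ i ∈ Finset.Icc 1 (L - 1), Real.log (q (i + 1)) := by
  have hq1 := hq 1 le_rfl (by omega)
  have h1 : Real.log (q 1) ≤ 0 := Real.log_nonpos hq1.1.le hq1.2
  have hterm : ∀ i ∈ Finset.Icc 1 (L - 1),
      max 0 (Real.log (p i / q (i + 1))) ≤ -Real.log (q (i + 1)) := by
    intro i hi
    simp only [Finset.mem_Icc] at hi
    have hqi := hq (i + 1) (by omega) (by omega)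
    have hpi := hp i hi.1 hi.2
    have hlq : Real.log (q (i + 1)) ≤ 0 := Real.log_nonpos hqi.1.le hqi.2
    have hlp : Real.log (p i) ≤ 0 := Real.log_nonpos hpi.1.le hpi.2
    rw [Real.log_div hpi.1.ne' hqi.1.ne']
    exact max_le (by linarith) (by linarith)
  have hmax : -max 0 (Real.log (q 1)) ≤ -Real.log (q 1) := by
    rw [max_eq_left h1]; linarith
  have hsum := Finset.sum_le_sum hterm
  rw [Finset.sum_neg_distrib] at hsum
  linarith
end
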